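/- Let $\Omega\subset\mathbb{R}^N$ be a bounded open set, $G\subset\Omega$ measurable, and let $w_n$ be measurable functions with $0\le w_n\le M$ a.e. and $w_n\to\chi_G$ a.e. in $\Omega$. Let $u_n\in W^{1,2}(\Omega)$ with $\|u_n\|_{L^\infty(\Omega)}\le C$ and suppose $\sqrt{w_n}\nabla u_n$ is bounded in $L^2(\Omega,\mathbb{R}^N)$, converging weakly in $L^2$ to some $V$. If for every ball $B_{2R}(y)\Subset\Omega\setminus\overline{G}$ one has $\int_{B_R(y)} w_n|\nabla u_n|^2 \le \frac{C'}{R^2}\int_{B_{2R}(y)} w_n u_n^2$ for all $n$, then $V=0$ a.e. in $\Omega\setminus\overline{G}$. -/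

import Mathlib

open MeasureTheory Metric Set Filter
open scoped ENNReal RealInnerProductSpace

noncomputable section

abbrev Euc (n : ℕ) : Type := EuclideanSpace ℝ (Fin n)

open scoped Topology

/-! On a ball `B_{2R}` away from `closure G` the weights `w_k` tend to `0` a.e., so by dominated
convergence `∫_{B_{2R}} w_k u_k² → 0`, and the Caccioppoli inequality gives
`‖√w_k ∇u_k‖_{L²(B_R)} → 0`. A sequence converging strongly to `0` and weakly to `V` forces
`V = 0` on `B_R`, and countably many such balls cover `Ω \ closure G`. -/

section L2

variable {α E : Type*} [MeasurableSpace α] {μ : Measure α}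
  [NormedAddCommGroup E] [InnerProductSpace ℝ E]

theorem MeasureTheory.MemLp.inner_toLp_toLp {f g : α → E} (hf : MemLp f 2 μ)
    (hg : MemLp g 2 μ) : ⟪hf.toLp f, hg.toLp g⟫ = ∫ x, ⟪f x, g x⟫ ∂μ := by
  rw [L2.inner_def]
  refine integral_congr_ae ?_
  filter_upwards [hf.coeFn_toLp, hg.coeFn_toLp] with x hfx hgx
  rw [hfx, hgx]

theorem MeasureTheory.MemLp.norm_toLp_sq {f : α → E} (hf : MemLp f 2 μ) :
    ‖hf.toLp f‖ ^ 2 = ∫ x, ‖f x‖ ^ 2 ∂μ := by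
  simp_rw [← real_inner_self_eq_norm_sq, hf.inner_toLp_toLp]

theorem ae_eq_zero_of_tendsto_integral_inner {F : ℕ → α → E} {V : α → E}
    (hF : ∀ k, MemLp (F k) 2 μ) (hV : MemLp V 2 μ)
    (henergy : Tendsto (fun k => ∫ x, ‖F k x‖ ^ 2 ∂μ) atTop (𝓝 0))
    (hweak : Tendsto (fun k => ∫ x, ⟪F k x, V x⟫ ∂μ) atTop (𝓝 (∫ x, ⟪V x, V x⟫ ∂μ))) :
    V =ᵐ[μ] 0 := by
  have hstrong : Tendsto (fun k => (hF k).toLp (F k)) atTop (𝓝 0) := by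
    rw [tendsto_zero_iff_norm_tendsto_zero]
    simpa only [Function.comp_def, ← (hF _).norm_toLp_sq, Real.sqrt_sq (norm_nonneg _),
      Real.sqrt_zero] using (Real.continuous_sqrt.tendsto 0).comp henergy
  have hself : ⟪hV.toLp V, hV.toLp V⟫ = 0 := by
    refine tendsto_nhds_unique ?_
      (by simpa using hstrong.inner (tendsto_const_nhds (x := hV.toLp V)))
    simpa only [MemLp.inner_toLp_toLp] using hweak
  rw [inner_self_eq_zero, Lp.eq_zero_iff_ae_eq_zero] at hself
  exact hV.coeFn_toLp.symm.trans hself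

theorem setIntegral_inner_indicator {s t : Set α} (hs : MeasurableSet s) (hst : s ⊆ t)
    (f φ : α → E) : ∫ x in t, ⟪f x, s.indicator φ x⟫ ∂μ = ∫ x in s, ⟪f x, φ x⟫ ∂μ := by
  have hind : (fun x => ⟪f x, s.indicator φ x⟫) = s.indicator fun x => ⟪f x, φ x⟫ := by
    ext x
    by_cases hx : x ∈ s <;> simp [hx]
  rw [hind, setIntegral_indicator hs, inter_eq_right.2 hst]

theorem norm_sqrt_smul_sq {a : ℝ} (ha : 0 ≤ a) (v : E) : ‖√a • v‖ ^ 2 = a * ‖v‖ ^ 2 := by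
  rw [norm_smul, mul_pow, Real.norm_eq_abs, sq_abs, Real.sq_sqrt ha]

theorem memLp_two_sqrt_smul {w : α → ℝ} {g : α → E} (hw : AEStronglyMeasurable w μ)
    (hw0 : ∀ᵐ x ∂μ, 0 ≤ w x) (hg : AEStronglyMeasurable g μ)
    (hint : Integrable (fun x => w x * ‖g x‖ ^ 2) μ) : MemLp (fun x => √(w x) • g x) 2 μ := by
  refine (memLp_two_iff_integrable_sq_norm
    ((Real.continuous_sqrt.comp_aestronglyMeasurable hw).smul hg)).2 (hint.congr ?_)
  filter_upwards [hw0] with x hx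
  exact (norm_sqrt_smul_sq hx (g x)).symm

end L2

theorem tendsto_integral_mul_sq_of_tendsto_zero {α : Type*} [MeasurableSpace α] {μ : Measure α}
    [IsFiniteMeasure μ] {w u : ℕ → α → ℝ} {M C : ℝ}
    (hw : ∀ k, AEStronglyMeasurable (w k) μ) (hu : ∀ k, AEStronglyMeasurable (u k) μ)
    (hwb : ∀ k, ∀ᵐ x ∂μ, |w k x| ≤ M) (hub : ∀ k, ∀ᵐ x ∂μ, |u k x| ≤ C)
    (hw0 : ∀ᵐ x ∂μ, Tendsto (fun k => w k x) atTop (𝓝 0)) :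
    Tendsto (fun k => ∫ x, w k x * u k x ^ 2 ∂μ) atTop (𝓝 0) := by
  have hsq : ∀ {a : ℝ}, |a| ≤ C → a ^ 2 ≤ C ^ 2 := fun h => sq_le_sq.2 (h.trans (le_abs_self C))
  refine (tendsto_integral_of_dominated_convergence (F := fun k x => w k x * u k x ^ 2)
    (f := fun _ => 0) (fun _ => M * C ^ 2)
    (fun k => (hw k).mul ((hu k).pow 2)) (integrable_const _) (fun k => ?_) ?_).trans_eq
    (by rw [integral_zero])
  · filter_upwards [hwb k, hub k] with x hwx hux
    rw [norm_mul, norm_pow, Real.norm_eq_abs, Real.norm_eq_abs, sq_abs]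
    exact mul_le_mul hwx (hsq hux) (sq_nonneg _) ((abs_nonneg _).trans hwx)
  · filter_upwards [hw0, ae_all_iff.2 hub] with x hwx hux
    refine squeeze_zero_norm (fun k => ?_) ((hwx.norm.mul_const (C ^ 2)).trans_eq (by simp))
    rw [norm_mul, norm_pow, Real.norm_eq_abs (u k x), sq_abs]
    exact mul_le_mul_of_nonneg_left (hsq (hux k)) (norm_nonneg _)

theorem ae_restrict_of_forall_ae_restrict_ball {X : Type*} [PseudoMetricSpace X]
    [SecondCountableTopology X] [MeasurableSpace X] [OpensMeasurableSpace X] {μ : Measure X}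
    {U : Set X} (hU : IsOpen U) {p : X → Prop}
    (h : ∀ y R, 0 < R → ball y (2 * R) ⊆ U → ∀ᵐ x ∂μ.restrict (ball y R), p x) :
    ∀ᵐ x ∂μ.restrict U, p x := by
  rw [ae_iff, Measure.restrict_apply' hU.measurableSet]
  refine measure_null_of_locally_null _ fun y hy => ?_
  obtain ⟨ε, hε, hεU⟩ := Metric.isOpen_iff.1 hU y hy.2
  refine ⟨{x | ¬p x} ∩ U ∩ ball y (ε / 2),
    inter_mem_nhdsWithin _ (ball_mem_nhds y (by positivity)),
    measure_mono_null (inter_subset_inter_left _ inter_subset_left) ?_⟩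
  have hball := h y (ε / 2) (by positivity) (by rwa [mul_div_cancel₀ _ two_ne_zero])
  rwa [ae_iff, Measure.restrict_apply' measurableSet_ball] at hball
theorem weak_limit_vanishes_outside_general {n : ℕ} (Ω : Set (Euc n)) (hΩo : IsOpen Ω)
    (G : Set (Euc n))
    (M C C' : ℝ)
    (w : ℕ → Euc n → ℝ) (u : ℕ → Euc n → ℝ) (g : ℕ → Euc n → Euc n)
    (V : Euc n → Euc n)
    (hwm : ∀ k, Measurable (w k))
    (hwb : ∀ k, ∀ᵐ x ∂volume.restrict Ω, 0 ≤ w k x ∧ w k x ≤ M)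
    (hwconv : ∀ᵐ x ∂volume.restrict Ω,
      Tendsto (fun k => w k x) atTop (nhds (G.indicator (fun _ => (1 : ℝ)) x)))
    (hum : ∀ k, AEMeasurable (u k) (volume.restrict Ω))
    (hub : ∀ k, ∀ᵐ x ∂volume.restrict Ω, |u k x| ≤ C)
    (hgm : ∀ k, AEStronglyMeasurable (g k) (volume.restrict Ω))
    (hgint : ∀ k, IntegrableOn (fun x => w k x * ‖g k x‖ ^ 2) Ω)
    (hV : MemLp V 2 (volume.restrict Ω))
    (hweak : ∀ φ : Euc n → Euc n, MemLp φ 2 (volume.restrict Ω) →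
      Tendsto (fun k => ∫ x in Ω, ⟪Real.sqrt (w k x) • g k x, φ x⟫) atTop
        (nhds (∫ x in Ω, ⟪V x, φ x⟫)))
    (hcacc : ∀ k, ∀ (y : Euc n) (R : ℝ), 0 < R → ball y (2 * R) ⊆ Ω \ closure G →
      ∫ x in ball y R, w k x * ‖g k x‖ ^ 2 ≤
        (C' / R ^ 2) * ∫ x in ball y (2 * R), w k x * (u k x) ^ 2) :
    ∀ᵐ x ∂volume.restrict (Ω \ closure G), V x = 0 := by
  refine ae_restrict_of_forall_ae_restrict_ball (hΩo.sdiff isClosed_closure) fun y R hR hsub => ?_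
  have h2Ω : ball y (2 * R) ⊆ Ω := hsub.trans sdiff_subset
  have h1Ω : ball y R ⊆ Ω := (ball_subset_ball (by linarith)).trans h2Ω
  have : IsFiniteMeasure (volume.restrict (ball y (2 * R))) :=
    isFiniteMeasure_restrict.2 measure_ball_lt_top.ne
  have hw0 : ∀ᵐ x ∂volume.restrict (ball y (2 * R)), Tendsto (fun k => w k x) atTop (𝓝 0) := by
    filter_upwards [ae_restrict_of_ae_restrict_of_subset h2Ω hwconv,
      ae_restrict_mem measurableSet_ball] with x hx hxB
    rwa [indicator_of_notMem fun hxG => (hsub hxB).2 (subset_closure hxG)] at hx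
  have hpot := tendsto_integral_mul_sq_of_tendsto_zero (fun k => (hwm k).aestronglyMeasurable)
    (fun k => ((hum k).mono_measure (Measure.restrict_mono h2Ω le_rfl)).aestronglyMeasurable)
    (fun k => (ae_restrict_of_ae_restrict_of_subset h2Ω (hwb k)).mono fun x hx =>
      abs_le.2 ⟨by linarith [hx.1, hx.2], hx.2⟩)
    (fun k => ae_restrict_of_ae_restrict_of_subset h2Ω (hub k)) hw0
  have hwR k := ae_restrict_of_ae_restrict_of_subset h1Ω (hwb k)
  have henergy : Tendsto (fun k => ∫ x in ball y R, w k x * ‖g k x‖ ^ 2) atTop (𝓝 0) :=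
    squeeze_zero (fun k => integral_nonneg_of_ae ((hwR k).mono fun x hx =>
      mul_nonneg hx.1 (sq_nonneg _))) (fun k => hcacc k y R hR hsub)
      (by simpa using hpot.const_mul (C' / R ^ 2))
  refine ae_eq_zero_of_tendsto_integral_inner (F := fun k x => √(w k x) • g k x)
    (fun k => memLp_two_sqrt_smul (hwm k).aestronglyMeasurable ((hwR k).mono fun x hx => hx.1)
      ((hgm k).mono_measure (Measure.restrict_mono h1Ω le_rfl)) ((hgint k).mono_set h1Ω))
    (hV.mono_measure (Measure.restrict_mono h1Ω le_rfl))
    (henergy.congr fun k => integral_congr_ae ((hwR k).mono fun x hx =>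
      (norm_sqrt_smul_sq hx.1 _).symm)) ?_
  simpa only [setIntegral_inner_indicator measurableSet_ball h1Ω] using
    hweak ((ball y R).indicator V) (hV.indicator measurableSet_ball)

/-- **Localization of the weak limit (Theorem 4.2, localization step).** If `w_k → χ_G` a.e.
with `0 ≤ w_k ≤ M`, `‖u_k‖_∞ ≤ C`, `√w_k ∇u_k` (here `∇u_k = g_k`) is bounded in `L²` and
converges weakly in `L²(Ω)` to `V`, and the Caccioppoli inequality
`∫_{B_R} w_k|g_k|² ≤ (C'/R²)∫_{B_{2R}} w_k u_k²` holds on every ball `B_{2R} ⋐ Ω \ closure G`,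
then `V = 0` a.e. in `Ω \ closure G`. -/
theorem weak_limit_vanishes_outside {n : ℕ} (Ω : Set (Euc n)) (hΩo : IsOpen Ω)
    (hΩb : Bornology.IsBounded Ω)
    (G : Set (Euc n)) (hGm : MeasurableSet G) (hGΩ : G ⊆ Ω)
    (M C C' C'' : ℝ)
    (w : ℕ → Euc n → ℝ) (u : ℕ → Euc n → ℝ) (g : ℕ → Euc n → Euc n)
    (V : Euc n → Euc n)
    (hwm : ∀ k, Measurable (w k))
    (hwb : ∀ k, ∀ᵐ x ∂volume.restrict Ω, 0 ≤ w k x ∧ w k x ≤ M)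
    (hwconv : ∀ᵐ x ∂volume.restrict Ω,
      Tendsto (fun k => w k x) atTop (nhds (G.indicator (fun _ => (1 : ℝ)) x)))
    (hum : ∀ k, AEMeasurable (u k) (volume.restrict Ω))
    (hub : ∀ k, ∀ᵐ x ∂volume.restrict Ω, |u k x| ≤ C)
    (hgm : ∀ k, AEStronglyMeasurable (g k) (volume.restrict Ω))
    (hgint : ∀ k, IntegrableOn (fun x => w k x * ‖g k x‖ ^ 2) Ω)
    (hgb : ∀ k, ∫ x in Ω, w k x * ‖g k x‖ ^ 2 ≤ C'')
    (hV : MemLp V 2 (volume.restrict Ω))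
    (hweak : ∀ φ : Euc n → Euc n, MemLp φ 2 (volume.restrict Ω) →
      Tendsto (fun k => ∫ x in Ω, ⟪Real.sqrt (w k x) • g k x, φ x⟫) atTop
        (nhds (∫ x in Ω, ⟪V x, φ x⟫)))
    (hcacc : ∀ k, ∀ (y : Euc n) (R : ℝ), 0 < R → ball y (2 * R) ⊆ Ω \ closure G →
      ∫ x in ball y R, w k x * ‖g k x‖ ^ 2 ≤
        (C' / R ^ 2) * ∫ x in ball y (2 * R), w k x * (u k x) ^ 2) :
    ∀ᵐ x ∂volume.restrict (Ω \ closure G), V x = 0 :=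
  weak_limit_vanishes_outside_general Ω hΩo G M C C' w u g V hwm hwb hwconv hum hub hgm hgint hV
    hweak hcacc
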